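/- arXiv:2012.02758 — 2 statements merged into one kernel-verified Lean document; each statement's English description precedes it below -/
import Mathlib

section
/- If B is a Boolean subalgebra of the power set of ℕ (closed under intersection, union and complement, containing ∅ and ℕ) whose cardinality is strictly less than the splitting number 𝔰, then there exist an ultrafilter U on B and an infinite set A ⊆ ℕ such that A ∖ b is finite for every b ∈ U (i.e., A is a pseudointersection of U). -/
open Set

noncomputable section

/-- A splitting family: for every infinite `A ⊆ ℕ` some member splits `A`. -/
def IsSplittingFamily (S : Set (Set ℕ)) : Prop :=
  ∀ A : Set ℕ, A.Infinite → ∃ s ∈ S, (A ∩ s).Infinite ∧ (A \ s).Infinite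

/-- The splitting number `𝔰`: the least cardinality of a splitting family. -/
def splittingNumber : Cardinal :=
  sInf { c : Cardinal | ∃ S : Set (Set ℕ), IsSplittingFamily S ∧ Cardinal.mk S = c }

/-- An ultrafilter on a Boolean subalgebra `B` of `P(ℕ)`: a subset of `B` closed under
finite intersections, upward closed within `B`, omitting `∅`, and containing exactly
one of `b`, `ℕ ∖ b` for each `b ∈ B`. -/
def IsUltrafilterOn (B U : Set (Set ℕ)) : Prop :=
  U ⊆ B ∧
  (∀ s ∈ U, ∀ t ∈ U, s ∩ t ∈ U) ∧
  (∀ s ∈ U, ∀ t ∈ B, s ⊆ t → t ∈ U) ∧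
  ∅ ∉ U ∧
  (∀ b ∈ B, Xor' (b ∈ U) (bᶜ ∈ U))

/-! Since `|B| < 𝔰`, the algebra `B` is not splitting, so some infinite `A` is split by no member
of `B`. Then each `b ∈ B` almost contains `A` or is almost disjoint from it, so the members of `B`
almost containing `A` form an ultrafilter on `B`, with `A` as a pseudointersection. -/

def almostSupersets (B : Set (Set ℕ)) (A : Set ℕ) : Set (Set ℕ) :=
  {b ∈ B | (A \ b).Finite}

theorem exists_unsplit_of_mk_lt_splittingNumber {S : Set (Set ℕ)}
    (hS : Cardinal.mk S < splittingNumber) :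
    ∃ A : Set ℕ, A.Infinite ∧ ∀ s ∈ S, (A ∩ s).Finite ∨ (A \ s).Finite := by
  have hnot : ¬ IsSplittingFamily S := fun hsplit =>
    (csInf_le' ⟨S, hsplit, rfl⟩ : splittingNumber ≤ Cardinal.mk S).not_gt hS
  simpa only [IsSplittingFamily, not_forall, not_exists, not_and, exists_prop,
    ← Set.not_infinite, ← not_or, not_not, or_iff_not_imp_left] using hnot

theorem isUltrafilterOn_almostSupersets {B : Set (Set ℕ)} {A : Set ℕ}
    (hinter : ∀ s ∈ B, ∀ t ∈ B, s ∩ t ∈ B) (hcompl : ∀ s ∈ B, sᶜ ∈ B)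
    (hA : A.Infinite) (hunsplit : ∀ b ∈ B, (A ∩ b).Finite ∨ (A \ b).Finite) :
    IsUltrafilterOn B (almostSupersets B A) := by
  have not_both : ∀ b, (A ∩ b).Finite → (A \ b).Finite → False := fun b h₁ h₂ =>
    hA (by simpa only [Set.inter_union_sdiff] using h₁.union h₂)
  refine ⟨fun b hb => hb.1, ?_, ?_, ?_, ?_⟩
  · rintro s ⟨hsB, hsA⟩ t ⟨htB, htA⟩
    exact ⟨hinter s hsB t htB, by simpa only [Set.sdiff_inter] using hsA.union htA⟩
  · rintro s ⟨-, hsA⟩ t htB hst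
    exact ⟨htB, hsA.subset (Set.sdiff_subset_sdiff_right hst)⟩
  · rintro ⟨-, hA'⟩
    exact hA (by simpa only [Set.sdiff_empty] using hA')
  · intro b hb
    simp only [almostSupersets, Set.mem_ofPred_eq, Set.sdiff_compl, hb, hcompl b hb, true_and]
    rcases hunsplit b hb with h | h
    · exact Or.inr ⟨h, fun h' => not_both b h h'⟩
    · exact Or.inl ⟨h, fun h' => not_both b h' h⟩

theorem stmt0_general (B : Set (Set ℕ))
    (hinter : ∀ s ∈ B, ∀ t ∈ B, s ∩ t ∈ B)
    (hcompl : ∀ s ∈ B, sᶜ ∈ B)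
    (hcard : Cardinal.mk B < splittingNumber) :
    ∃ U : Set (Set ℕ), IsUltrafilterOn B U ∧
      ∃ A : Set ℕ, A.Infinite ∧ ∀ b ∈ U, (A \ b).Finite := by
  obtain ⟨A, hA, hunsplit⟩ := exists_unsplit_of_mk_lt_splittingNumber hcard
  exact ⟨almostSupersets B A, isUltrafilterOn_almostSupersets hinter hcompl hA hunsplit,
    A, hA, fun _ hb => hb.2⟩

/-- If `B` is a Boolean subalgebra of `P(ℕ)` of cardinality less than the splitting
number `𝔰`, then some ultrafilter of `B` has an infinite pseudointersection. -/
theorem stmt0 (B : Set (Set ℕ))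
    (hempty : ∅ ∈ B) (huniv : Set.univ ∈ B)
    (hinter : ∀ s ∈ B, ∀ t ∈ B, s ∩ t ∈ B)
    (hunion : ∀ s ∈ B, ∀ t ∈ B, s ∪ t ∈ B)
    (hcompl : ∀ s ∈ B, sᶜ ∈ B)
    (hcard : Cardinal.mk B < splittingNumber) :
    ∃ U : Set (Set ℕ), IsUltrafilterOn B U ∧
      ∃ A : Set ℕ, A.Infinite ∧ ∀ b ∈ U, (A \ b).Finite :=
  stmt0_general B hinter hcompl hcard

end
end

section
/- Let A = ⟨a_α : α < λ⟩ be a proper coherent sequence of subsets of ℕ. Then the topology τ(A) on the set of ordinals ≤ λ is compact, Hausdorff, and scattered, and each set â_β (β < λ) is a compact open subset in this topology. -/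
open Set

noncomputable section

/-- The least uncountable ordinal `ω₁`. -/
def omega1 : Ordinal := (Cardinal.aleph 1).ord

/-- `⋃_{γ ∈ F} a_γ` for a finite set `F` of indices. -/
def unionFin (a : Ordinal → Set ℕ) (F : Finset Ordinal) : Set ℕ :=
  ⋃ γ ∈ F, a γ

/-- A sequence of subsets of `ℕ`, with indices from a (downward closed) domain `D`
of ordinals, is coherent if for all `α ≤ β` in the domain there is a finite `F ⊆ α`
with `a α ∩ a β ⊆ ⋃_{γ∈F} a γ` or `a α ⊆ a β ∪ ⋃_{γ∈F} a γ`. -/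
def CoherentOn (D : Set Ordinal) (a : Ordinal → Set ℕ) : Prop :=
  ∀ α β : Ordinal, α ≤ β → β ∈ D →
    ∃ F : Finset Ordinal, (∀ γ ∈ F, γ < α) ∧
      (a α ∩ a β ⊆ unionFin a F ∨ a α ⊆ a β ∪ unionFin a F)

/-- Properness: no `a β` is contained in a finite union of earlier terms. -/
def ProperOn (D : Set Ordinal) (a : Ordinal → Set ℕ) : Prop :=
  ∀ β ∈ D, ∀ F : Finset Ordinal, (∀ γ ∈ F, γ < β) → ¬ a β ⊆ unionFin a F

/-- `â_β = { α ≤ β : a α ∖ a β ⊆ ⋃_{γ∈F} a γ for some finite F ⊆ α }`. -/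
def hatA (a : Ordinal → Set ℕ) (β : Ordinal) : Set Ordinal :=
  { α | α ≤ β ∧ ∃ F : Finset Ordinal, (∀ γ ∈ F, γ < α) ∧ a α \ a β ⊆ unionFin a F }

/-- The topology `τ(A)` on `λ + 1 = {α : α ≤ λ}` generated by the subbase
consisting of the sets `â_β` and their complements, `β < λ`. -/
def tau (lam : Ordinal) (a : Ordinal → Set ℕ) :
    TopologicalSpace {α : Ordinal // α ≤ lam} :=
  TopologicalSpace.generateFrom
    { s | ∃ β < lam, s = {x : {α : Ordinal // α ≤ lam} | x.1 ∈ hatA a β} ∨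
                     s = {x : {α : Ordinal // α ≤ lam} | x.1 ∈ hatA a β}ᶜ }

/-- The subspace `ω₁ = {α : α < ω₁}` of `(ω₁+1, τ(A))`. -/
def tauSub (a : Ordinal → Set ℕ) : TopologicalSpace {y : Ordinal // y < omega1} :=
  TopologicalSpace.induced
    (fun y : {y : Ordinal // y < omega1} => (⟨y.1, y.2.le⟩ : {α : Ordinal // α ≤ omega1}))
    (tau omega1 a)

/-- Closed unbounded subsets of `ω₁`. -/
def IsClubOmega1 (C : Set Ordinal) : Prop :=
  C ⊆ Iio omega1 ∧
  (∀ α < omega1, ∃ β ∈ C, α ≤ β) ∧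
  (∀ δ, δ < omega1 → δ ≠ 0 → (∀ α < δ, ∃ β ∈ C, α < β ∧ β < δ) → δ ∈ C)

/-- Stationary subsets of `ω₁`: sets meeting every club. -/
def IsStationaryOmega1 (S : Set Ordinal) : Prop :=
  ∀ C : Set Ordinal, IsClubOmega1 C → (S ∩ C).Nonempty

/-- The stationary covering property for a coherent sequence whose index domain is `D`:
if the sequence has length `ω₁` (i.e. `Iio ω₁ ⊆ D`), then every stationary `S ⊆ ω₁`
together with some finite `F` covers, i.e. `⋃_{γ ∈ S ∪ F} â_γ = ω₁`.  (Sequences of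
length `< ω₁` have the ScP by convention.) -/
def HasScP (D : Set Ordinal) (a : Ordinal → Set ℕ) : Prop :=
  Iio omega1 ⊆ D →
    ∀ S : Set Ordinal, S ⊆ Iio omega1 → IsStationaryOmega1 S →
      ∃ F : Finset Ordinal, (⋃ γ ∈ S ∪ (↑F : Set Ordinal), hatA a γ) = Iio omega1

/-- A node of the tree `2^{≤ω₁}`: a function `val` defined on the ordinals `< len`
(with the canonical value `false` beyond `len`). -/
structure Node where
  len : Ordinal
  val : Ordinal → Bool
  canon : ∀ α, len ≤ α → val α = false

open Classical in
/-- The restriction `x ↾ β`. -/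
def Node.restrict (x : Node) (β : Ordinal) : Node where
  len := β
  val := fun α => if α < β then x.val α else false
  canon := fun α h => if_neg (not_lt.2 h)

/-- `τ.Extends σ` means `σ ⊆ τ`, i.e. `τ` extends `σ`. -/
def Node.Extends (τ σ : Node) : Prop :=
  σ.len ≤ τ.len ∧ ∀ α < σ.len, τ.val α = σ.val α

/-- Successor ordinals. -/
def IsSucc (o : Ordinal) : Prop := ∃ β, o = β + 1

open Classical in
/-- `σ†`: if `σ` has successor length `β+1`, the node agreeing with `σ` except at `β`;
otherwise `σ` itself. -/
def Node.dagger (σ : Node) : Node :=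
  if h : IsSucc σ.len then
    { len := σ.len
      val := fun α => if α = Classical.choose h then !(σ.val α) else σ.val α
      canon := by
        intro α hα
        have hs := Classical.choose_spec h
        have hne : α ≠ Classical.choose h := by
          intro he
          rw [hs, he] at hα
          rw [Ordinal.add_one_eq_succ] at hα
          exact absurd hα (not_le.2 (Order.lt_succ (Classical.choose h)))
        show (if α = Classical.choose h then !(σ.val α) else σ.val α) = false
        rw [if_neg hne]
        exact σ.canon α hα }
  else σ

open Classical in
/-- `σ ⌢ b` : the node `σ` extended by one value `b`. -/
def Node.snoc (σ : Node) (b : Bool) : Node where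
  len := σ.len + 1
  val := fun α => if α = σ.len then b else σ.val α
  canon := by
    intro α hα
    have h1 : σ.len < α := by
      have h2 : σ.len < σ.len + 1 := by
        rw [Ordinal.add_one_eq_succ]; exact Order.lt_succ σ.len
      exact lt_of_lt_of_le h2 hα
    show (if α = σ.len then b else σ.val α) = false
    rw [if_neg h1.ne']
    exact σ.canon α h1.le

open Classical in
/-- `x ⌢ σ` : concatenation of nodes. -/
def Node.append (x σ : Node) : Node where
  len := x.len + σ.len
  val := fun α => if α < x.len then x.val α else σ.val (α - x.len)
  canon := by
    intro α hα
    have h1 : ¬ α < x.len := not_lt.2 (le_trans (le_self_add : x.len ≤ x.len + σ.len) hα)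
    show (if α < x.len then x.val α else σ.val (α - x.len)) = false
    rw [if_neg h1]
    apply σ.canon
    by_contra h2
    rw [not_le] at h2
    have h3 : α ≤ x.len + (α - x.len) := Ordinal.le_add_sub α x.len
    have h4 : x.len + (α - x.len) < x.len + σ.len := add_lt_add_of_le_of_lt (le_refl x.len) h2
    exact absurd hα (not_le.2 (lt_of_le_of_lt h3 h4))

/-- A subtree of `2^{<ω₁}` that is downward closed, twinned and has no maximal elements. -/
structure GoodTree (Γ : Set Node) : Prop where
  lt_omega1 : ∀ σ ∈ Γ, σ.len < omega1
  downward : ∀ σ ∈ Γ, ∀ β ≤ σ.len, σ.restrict β ∈ Γ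
  twinned : ∀ σ ∈ Γ, σ.dagger ∈ Γ
  noMax : ∀ σ ∈ Γ, ∃ τ ∈ Γ, σ.len < τ.len ∧ τ.Extends σ

/-- `X(Γ)`: the maximal branches of `Γ`, i.e. the minimal elements of `2^{≤ω₁} ∖ Γ`. -/
def XGamma (Γ : Set Node) : Set Node :=
  { x | x.len ≤ omega1 ∧ x ∉ Γ ∧ ∀ β < x.len, x.restrict β ∈ Γ }

/-- The index domain of the branch sequence `A_{Γ,x}`. -/
def branchDomain (Γ : Set Node) (x : Node) : Set Ordinal :=
  { α | α + 1 ≤ x.len ∧ x.restrict (α + 1) ∈ Γ }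

/-- The branch sequence `A_{Γ,x}`, `a^x_α = a_{x ↾ (α+1)}`. -/
def branchSeq (a : Node → Set ℕ) (x : Node) : Ordinal → Set ℕ :=
  fun α => a (x.restrict (α + 1))

/-- A `𝕋`-algebra on the tree `Γ`. -/
structure IsTAlgebra (Γ : Set Node) (a : Node → Set ℕ) : Prop where
  tree : GoodTree Γ
  empty_of_not_succ : ∀ σ ∈ Γ, ¬ IsSucc σ.len → a σ = ∅
  compl_dagger : ∀ σ ∈ Γ, IsSucc σ.len → a σ.dagger = (a σ)ᶜ
  branch_coherent : ∀ x : Node, x.len ≤ omega1 →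
    CoherentOn (branchDomain Γ x) (branchSeq a x)
  branch_proper : ∀ x : Node, x.len ≤ omega1 →
    ProperOn (branchDomain Γ x) (branchSeq a x)

/-- The Boolean subalgebra of `P(ℕ)` generated by a family `G`. -/
inductive GenBool (G : Set (Set ℕ)) : Set ℕ → Prop
  | basic (s : Set ℕ) : s ∈ G → GenBool G s
  | empty : GenBool G ∅
  | compl (s : Set ℕ) : GenBool G s → GenBool G sᶜ
  | inter (s t : Set ℕ) : GenBool G s → GenBool G t → GenBool G (s ∩ t)

/-- `B_Γ`: the Boolean subalgebra of `P(ℕ)` generated by `{a_σ : σ ∈ Γ}`. -/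
def BGamma (Γ : Set Node) (a : Node → Set ℕ) : Set (Set ℕ) :=
  { b | GenBool { s | ∃ σ ∈ Γ, s = a σ } b }

/-- A finite intersection from the family `{ℕ ∖ a_{x↾(α+1)} : α + 1 ≤ λ_x}`. -/
def finInterCompl (a : Node → Set ℕ) (x : Node) (F : Finset Ordinal) : Set ℕ :=
  ⋂ α ∈ F, (a (x.restrict (α + 1)))ᶜ

/-- The ultrafilter `U_x` on `B_Γ` generated by the finite intersections of
`{ℕ ∖ a_{x↾(α+1)} : α + 1 ≤ λ_x}`. -/
def Ux (Γ : Set Node) (a : Node → Set ℕ) (x : Node) : Set (Set ℕ) :=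
  { b | b ∈ BGamma Γ a ∧
    ∃ F : Finset Ordinal, (∀ α ∈ F, α + 1 ≤ x.len) ∧ finInterCompl a x F ⊆ b }

/-- The Stone topology on `X(Γ)`, with subbasic open sets `{z : b ∈ U_z}`, `b ∈ B_Γ`. -/
def stoneTop (Γ : Set Node) (a : Node → Set ℕ) :
    TopologicalSpace {z : Node // z ∈ XGamma Γ} :=
  TopologicalSpace.generateFrom
    { s | ∃ b ∈ BGamma Γ a, s = { z : {z : Node // z ∈ XGamma Γ} | b ∈ Ux Γ a z.1 } }

/-- The length-lexicographic (strict) order on finite binary strings. -/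
def LenLexLT (σ τ : Node) : Prop :=
  σ.len < τ.len ∨ (σ.len = τ.len ∧ ∃ i < σ.len, σ.val i = false ∧ τ.val i = true ∧
    ∀ j < i, σ.val j = τ.val j)

/-- `e` is the standard length-lexicographic enumeration of `2^{<ω}`. -/
def IsStdEnum (e : ℕ → Node) : Prop :=
  (∀ k, (e k).len < Ordinal.omega0) ∧
  (∀ σ : Node, σ.len < Ordinal.omega0 → ∃ k, e k = σ) ∧
  (∀ k l : ℕ, k < l → LenLexLT (e k) (e l))

/-- `⋃_{k<n} c^x_k` where `c^x_n = a^x_{e(n)} ∖ ⋃_{k<n} c^x_k` (recursively). -/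
def cUnion (a : Node → Set ℕ) (x : Node) (eb : ℕ → Ordinal) : ℕ → Set ℕ
  | 0 => ∅
  | n + 1 => cUnion a x eb n ∪ (a (x.restrict (eb n + 1)) \ cUnion a x eb n)

/-- `c^x_n = a^x_{e(n)} ∖ ⋃_{k<n} c^x_k`. -/
def cSeq (a : Node → Set ℕ) (x : Node) (eb : ℕ → Ordinal) (n : ℕ) : Set ℕ :=
  a (x.restrict (eb n + 1)) \ cUnion a x eb n

/-- `{x ⌢ σ : σ ∈ 2^{<ω}}`. -/
def appendSet (x : Node) : Set Node :=
  { τ | ∃ σ : Node, σ.len < Ordinal.omega0 ∧ τ = x.append σ }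

/-- The defining equations of the extension `A_Γ[π,x]`:
`a_x = ∅`, `a_{x⌢(σ⌢0)} = ⋃{c^x_k : σ⌢1 ⊆ σ_{π(k)}}`, `a_{x⌢(σ⌢1)} = ℕ ∖ a_{x⌢(σ⌢0)}`. -/
def ExtEquations (e : ℕ → Node) (π : ℕ → ℕ) (a : Node → Set ℕ) (x : Node)
    (eb : ℕ → Ordinal) (a' : Node → Set ℕ) : Prop :=
  a' x = ∅ ∧
  ∀ σ : Node, σ.len < Ordinal.omega0 →
    (a' (x.append (σ.snoc false)) =
      ⋃ k ∈ { k : ℕ | (e (π k)).Extends (σ.snoc true) }, cSeq a x eb k) ∧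
    (a' (x.append (σ.snoc true)) = (a' (x.append (σ.snoc false)))ᶜ)

/-- The full tree `2^{<ω₁}`. -/
def GammaFull : Set Node := { σ | σ.len < omega1 }

theorem natLtOmega1 (n : ℕ) : (n : Ordinal) < omega1 := by
  have h1 : (n : Ordinal) < Ordinal.omega0 := Ordinal.nat_lt_omega0 n
  have h2 : Ordinal.omega0 < omega1 := by
    rw [omega1, ← Cardinal.ord_aleph0]
    exact Cardinal.ord_lt_ord.2 (by rw [← Cardinal.aleph_zero]
                                    exact Cardinal.aleph_lt_aleph.2 zero_lt_one)
  exact h1.trans h2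

/-!
Each `â_β` is clopen, contains `β` and lies below `β`; so points are separated by these sets, and
the least point of any nonempty `Y` is isolated in `Y`. Compactness of `â_γ` goes by induction on
`γ`: by coherence and properness, `â_γ` minus any subbasic neighbourhood of `γ` is covered by
finitely many `â_δ` with `δ < γ`, and a closed set `K ∋ p` is compact as soon as `K ∖ s` is
compact for every subbasic `s ∋ p`. The same criterion at the point `λ` gives compactness of the
whole space.
-/

open TopologicalSpace

theorem IsCompact.of_isCompact_diff_of_mem {X : Type*} [TopologicalSpace X] {K : Set X} {p : X}
    (hp : p ∈ K) (h : ∀ U, IsOpen U → p ∈ U → IsCompact (K \ U)) : IsCompact K := by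
  classical
  refine isCompact_of_finite_subcover fun U hU hcov => ?_
  obtain ⟨i₀, hi₀⟩ := mem_iUnion.1 (hcov hp)
  obtain ⟨t, ht⟩ := (h _ (hU i₀) hi₀).elim_finite_subcover U hU (sdiff_subset.trans hcov)
  refine ⟨insert i₀ t, fun x hx => ?_⟩
  rw [Finset.set_biUnion_insert]
  by_cases hx₀ : x ∈ U i₀
  · exact Or.inl hx₀
  · exact Or.inr (ht ⟨hx, hx₀⟩)

theorem IsCompact.of_isCompact_diff_subbasic {X : Type*} [t : TopologicalSpace X]
    {S : Set (Set X)} (hS : t = generateFrom S) {K : Set X} (hK : IsClosed K) {p : X}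
    (hp : p ∈ K) (h : ∀ s ∈ S, p ∈ s → IsCompact (K \ s)) : IsCompact K := by
  refine IsCompact.of_isCompact_diff_of_mem hp fun U hU hpU => ?_
  obtain ⟨_, ⟨f, ⟨hf, hfS⟩, rfl⟩, hpf, hfU⟩ :=
    (isTopologicalBasis_of_subbasis hS).exists_subset_of_mem_open hpU hU
  refine (hf.isCompact_biUnion fun s hs => h s (hfS hs) (hpf s hs)).of_isClosed_subset
    (hK.sdiff hU) fun x ⟨hxK, hxU⟩ => ?_
  obtain ⟨s, hs, hxs⟩ : ∃ s ∈ f, x ∉ s := by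
    by_contra! hall
    exact hxU (hfU hall)
  exact mem_biUnion hs ⟨hxK, hxs⟩

/-- `s` lies in the ideal generated by `{a γ : γ < α}`. -/
def CoveredBelow (a : Ordinal → Set ℕ) (α : Ordinal) (s : Set ℕ) : Prop :=
  ∃ F : Finset Ordinal, (∀ γ ∈ F, γ < α) ∧ s ⊆ unionFin a F

section CoveredBelow

variable {a : Ordinal → Set ℕ} {α : Ordinal} {s t : Set ℕ}

theorem CoveredBelow.mono (hst : s ⊆ t) (ht : CoveredBelow a α t) : CoveredBelow a α s :=
  let ⟨F, hF, htF⟩ := ht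
  ⟨F, hF, hst.trans htF⟩

theorem coveredBelow_empty : CoveredBelow a α ∅ :=
  ⟨∅, by simp, empty_subset _⟩

theorem coveredBelow_of_subset {γ : Ordinal} (hγ : γ < α) (hs : s ⊆ a γ) :
    CoveredBelow a α s :=
  ⟨{γ}, by simpa using hγ, by simpa [unionFin] using hs⟩

theorem CoveredBelow.union (hs : CoveredBelow a α s) (ht : CoveredBelow a α t) :
    CoveredBelow a α (s ∪ t) := by
  classical
  obtain ⟨F, hF, hsF⟩ := hs
  obtain ⟨G, hG, htG⟩ := ht
  refine ⟨F ∪ G, by simpa [or_imp, forall_and] using And.intro hF hG, ?_⟩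
  simp only [unionFin, Finset.set_biUnion_union] at hsF htG ⊢
  exact union_subset_union hsF htG

theorem coveredBelow_biUnion {ι : Type*} (F : Finset ι) {f : ι → Set ℕ}
    (h : ∀ i ∈ F, CoveredBelow a α (f i)) : CoveredBelow a α (⋃ i ∈ F, f i) := by
  classical
  induction F using Finset.induction_on with
  | empty => simpa using coveredBelow_empty
  | insert i F _ ih =>
    rw [Finset.set_biUnion_insert]
    simp only [Finset.mem_insert, forall_eq_or_imp] at h
    exact h.1.union (ih h.2)

theorem mem_hatA_iff {β : Ordinal} : α ∈ hatA a β ↔ α ≤ β ∧ CoveredBelow a α (a α \ a β) :=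
  Iff.rfl

theorem mem_hatA_self (a : Ordinal → Set ℕ) (β : Ordinal) : β ∈ hatA a β :=
  mem_hatA_iff.2 ⟨le_rfl, coveredBelow_empty.mono (by simp)⟩

end CoveredBelow

section Coherent

variable {lam : Ordinal} {a : Ordinal → Set ℕ}

/-- Since `a α = (a α \ a β) ∪ (a α ∩ a β)`, properness forbids both halves to be small. -/
theorem not_coveredBelow_inter_of_mem_hatA (hprop : ProperOn (Iio lam) a) {α β : Ordinal}
    (hα : α < lam) (hαβ : α ∈ hatA a β) : ¬ CoveredBelow a α (a α ∩ a β) := fun hsmall => by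
  obtain ⟨F, hF, hsub⟩ := ((mem_hatA_iff.1 hαβ).2.union hsmall).mono fun x hx =>
    (em (x ∈ a β)).elim (fun h => Or.inr ⟨hx, h⟩) fun h => Or.inl ⟨hx, h⟩
  exact hprop α hα F hF hsub

theorem coveredBelow_inter_of_notMem_hatA (hcoh : CoherentOn (Iio lam) a) {α β : Ordinal}
    (hαβ : α ≤ β) (hβ : β < lam) (h : α ∉ hatA a β) : CoveredBelow a α (a α ∩ a β) := by
  obtain ⟨F, hF, hinter | hdiff⟩ := hcoh α β hαβ hβ
  · exact ⟨F, hF, hinter⟩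
  · exact absurd ⟨hαβ, F, hF, fun x hx => (hdiff hx.1).resolve_left hx.2⟩ h

theorem exists_mem_hatA_of_inter_subset (hcoh : CoherentOn (Iio lam) a)
    (hprop : ProperOn (Iio lam) a) {α γ : Ordinal} {F : Finset Ordinal} {c : Set ℕ}
    (hα : α < lam) (hF : ∀ δ ∈ F, δ < lam) (hαγ : α ∈ hatA a γ) (hc : CoveredBelow a α c)
    (hsub : a α ∩ a γ ⊆ c ∪ unionFin a F) : ∃ δ ∈ F, α ∈ hatA a δ := by
  by_contra! hnot
  have hsmall : CoveredBelow a α (a α ∩ unionFin a F) := by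
    rw [unionFin, inter_iUnion₂]
    refine coveredBelow_biUnion F fun δ hδ => ?_
    rcases lt_or_ge δ α with hδα | hαδ
    · exact coveredBelow_of_subset hδα inter_subset_right
    · exact coveredBelow_inter_of_notMem_hatA hcoh hαδ (hF δ hδ) (hnot δ hδ)
  refine not_coveredBelow_inter_of_mem_hatA hprop hα hαγ ((hc.union hsmall).mono ?_)
  intro x hx
  exact (hsub hx).imp id fun h => ⟨hx.1, h⟩

theorem hatA_diff_subset (hcoh : CoherentOn (Iio lam) a) (hprop : ProperOn (Iio lam) a)
    {β γ : Ordinal} (hγ : γ < lam) (hβ : β < lam) (hγβ : γ ∈ hatA a β) :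
    ∃ D : Finset Ordinal, (∀ δ ∈ D, δ < γ) ∧ hatA a γ \ hatA a β ⊆ ⋃ δ ∈ D, hatA a δ := by
  obtain ⟨hγβ, F, hF, hFsub⟩ := hγβ
  refine ⟨F, hF, fun α ⟨hαγ, hαβ⟩ => ?_⟩
  obtain ⟨δ, hδ, hαδ⟩ := exists_mem_hatA_of_inter_subset hcoh hprop (hαγ.1.trans_lt hγ)
    (fun δ hδ => (hF δ hδ).trans hγ) hαγ
    (coveredBelow_inter_of_notMem_hatA hcoh (hαγ.1.trans hγβ) hβ hαβ)
    fun x hx => (em (x ∈ a β)).imp (fun h => ⟨hx.1, h⟩) fun h => hFsub ⟨hx.2, h⟩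
  exact mem_biUnion hδ hαδ

theorem hatA_inter_subset (hcoh : CoherentOn (Iio lam) a) (hprop : ProperOn (Iio lam) a)
    {γ η : Ordinal} (hγ : γ < lam) (hη : η < lam) (hγη : γ ∉ hatA a η) :
    ∃ D : Finset Ordinal, (∀ δ ∈ D, δ < γ) ∧ hatA a γ ∩ hatA a η ⊆ ⋃ δ ∈ D, hatA a δ := by
  rcases lt_or_ge η γ with hηγ | hγη'
  · exact ⟨{η}, by simpa using hηγ, fun α hα => by simpa using hα.2⟩
  obtain ⟨F, hF, hFsub⟩ := coveredBelow_inter_of_notMem_hatA hcoh hγη' hη hγη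
  refine ⟨F, hF, fun α ⟨hαγ, hαη⟩ => ?_⟩
  obtain ⟨δ, hδ, hαδ⟩ := exists_mem_hatA_of_inter_subset hcoh hprop (hαγ.1.trans_lt hγ)
    (fun δ hδ => (hF δ hδ).trans hγ) hαγ hαη.2
    fun x hx => (em (x ∈ a η)).symm.imp (fun h => ⟨hx.1, h⟩) fun h => hFsub ⟨hx.2, h⟩
  exact mem_biUnion hδ hαδ

end Coherent

section Topology

variable {lam : Ordinal} {a : Ordinal → Set ℕ}

theorem isOpen_hatA {β : Ordinal} (hβ : β < lam) :
    @IsOpen _ (tau lam a) (Subtype.val ⁻¹' hatA a β : Set {α : Ordinal // α ≤ lam}) :=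
  isOpen_generateFrom_of_mem ⟨β, hβ, Or.inl rfl⟩

theorem isClosed_hatA {β : Ordinal} (hβ : β < lam) :
    @IsClosed _ (tau lam a) (Subtype.val ⁻¹' hatA a β : Set {α : Ordinal // α ≤ lam}) :=
  @isOpen_compl_iff _ _ (tau lam a) |>.1 (isOpen_generateFrom_of_mem ⟨β, hβ, Or.inr rfl⟩)

theorem exists_isOpen_mem_subset_Iic (x : {α : Ordinal // α ≤ lam}) :
    ∃ U, @IsOpen _ (tau lam a) U ∧ x ∈ U ∧ U ⊆ Iic x := by
  rcases x.2.lt_or_eq with hx | hx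
  · exact ⟨_, isOpen_hatA hx, mem_hatA_self a x.1, fun y hy => hy.1⟩
  · exact ⟨univ, @isOpen_univ _ (tau lam a), mem_univ x, fun y _ => y.2.trans hx.ge⟩

theorem t2Space_tau : @T2Space _ (tau lam a) := by
  let _ := tau lam a
  have hsep : ∀ x y : {α : Ordinal // α ≤ lam}, x < y →
      ∃ u v, IsOpen u ∧ IsOpen v ∧ x ∈ u ∧ y ∈ v ∧ Disjoint u v := fun x y hxy =>
    have hx : x.1 < lam := (show x.1 < y.1 from hxy).trans_le y.2
    ⟨_, _, isOpen_hatA hx, (isClosed_hatA hx).isOpen_compl, mem_hatA_self a x.1,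
      fun hy => hxy.not_ge hy.1, disjoint_compl_right⟩
  refine ⟨fun x y hxy => hxy.lt_or_gt.elim (hsep x y) fun hyx => ?_⟩
  obtain ⟨u, v, hu, hv, hyu, hxv, huv⟩ := hsep y x hyx
  exact ⟨v, u, hv, hu, hxv, hyu, huv.symm⟩

theorem exists_isOpen_inter_eq_singleton (Y : Set {α : Ordinal // α ≤ lam}) (hY : Y.Nonempty) :
    ∃ y ∈ Y, ∃ U, @IsOpen _ (tau lam a) U ∧ U ∩ Y = {y} := by
  obtain ⟨y, hyY, hmin⟩ := wellFounded_lt.has_min Y hY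
  obtain ⟨U, hU, hyU, hUy⟩ := exists_isOpen_mem_subset_Iic (a := a) y
  refine ⟨y, hyY, U, hU, eq_singleton_iff_unique_mem.2 ⟨⟨hyU, hyY⟩, fun z ⟨hzU, hzY⟩ => ?_⟩⟩
  exact le_antisymm (hUy hzU) (not_lt.1 (hmin z hzY))

variable (hcoh : CoherentOn (Iio lam) a) (hprop : ProperOn (Iio lam) a)
include hcoh hprop

theorem isCompact_hatA {γ : Ordinal} (hγ : γ < lam) :
    @IsCompact _ (tau lam a) (Subtype.val ⁻¹' hatA a γ : Set {α : Ordinal // α ≤ lam}) := by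
  induction γ using WellFoundedLT.induction with
  | _ γ ih =>
  let _ := tau lam a
  have hcover : ∀ {C : Set {α : Ordinal // α ≤ lam}} (D : Finset Ordinal), IsClosed C →
      (∀ δ ∈ D, δ < γ) → Subtype.val '' C ⊆ ⋃ δ ∈ D, hatA a δ → IsCompact C :=
    fun D hC hD hCD => (D.isCompact_biUnion fun δ hδ =>
      ih δ (hD δ hδ) ((hD δ hδ).trans hγ)).of_isClosed_subset hC fun x hx => by
        simpa using hCD (mem_image_of_mem _ hx)
  refine IsCompact.of_isCompact_diff_subbasic rfl (isClosed_hatA hγ)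
    (p := ⟨γ, hγ.le⟩) (mem_hatA_self a γ) ?_
  rintro s ⟨β, hβ, rfl | rfl⟩ hγs
  · obtain ⟨D, hD, hsub⟩ := hatA_diff_subset hcoh hprop hγ hβ hγs
    exact hcover D ((isClosed_hatA hγ).sdiff (isOpen_hatA hβ)) hD
      (image_subset_iff.2 fun x hx => hsub hx)
  · obtain ⟨D, hD, hsub⟩ := hatA_inter_subset hcoh hprop hγ hβ hγs
    rw [sdiff_compl]
    exact hcover D ((isClosed_hatA hγ).inter (isClosed_hatA hβ)) hD
      (image_subset_iff.2 fun x hx => hsub hx)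

theorem compactSpace_tau : @CompactSpace _ (tau lam a) := by
  let _ := tau lam a
  refine ⟨IsCompact.of_isCompact_diff_subbasic rfl isClosed_univ
    (p := ⟨lam, le_rfl⟩) (mem_univ _) ?_⟩
  rintro s ⟨β, hβ, rfl | rfl⟩ hs
  · exact absurd (hs.1.trans_lt hβ) (lt_irrefl lam)
  · rw [← compl_eq_univ_sdiff, compl_compl]
    exact isCompact_hatA hcoh hprop hβ

end Topology

/-- For a proper coherent sequence `A = ⟨a_α : α < λ⟩`, the topology `τ(A)` on
`λ + 1` is compact, Hausdorff and scattered, and each `â_β` (`β < λ`) is a compact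
open subset. -/
theorem stmt1 (lam : Ordinal) (a : Ordinal → Set ℕ)
    (hcoh : CoherentOn (Iio lam) a) (hprop : ProperOn (Iio lam) a) :
    @CompactSpace {α : Ordinal // α ≤ lam} (tau lam a) ∧
    @T2Space {α : Ordinal // α ≤ lam} (tau lam a) ∧
    (∀ Y : Set {α : Ordinal // α ≤ lam}, Y.Nonempty →
      ∃ y ∈ Y, ∃ U : Set {α : Ordinal // α ≤ lam},
        @IsOpen _ (tau lam a) U ∧ U ∩ Y = {y}) ∧
    (∀ β < lam,
      @IsCompact _ (tau lam a) {x : {α : Ordinal // α ≤ lam} | x.1 ∈ hatA a β} ∧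
      @IsOpen _ (tau lam a) {x : {α : Ordinal // α ≤ lam} | x.1 ∈ hatA a β}) :=
  ⟨compactSpace_tau hcoh hprop, t2Space_tau, exists_isOpen_inter_eq_singleton,
    fun _ hβ => ⟨isCompact_hatA hcoh hprop hβ, isOpen_hatA hβ⟩⟩
end
end
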